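/- Fix a field k and r ∈ ℕ, and let A^r be the r-th principal module over k[I]. Let M be any k[I]-module and let x ∈ M be an element satisfying α_i · x = x for all i > r (i.e., x is fixed by the submonoid I_{>r}). Then there exists a unique k[I]-linear map f : A^r → M such that f(e_{1,2,…,r}) = x. Consequently Hom_{k[I]}(A^r, M) is canonically isomorphic to the set of I_{>r}-fixed vectors of M. -/

import Mathlib

open scoped Classical

noncomputable section

/-- The increasing monoid `I`: the submonoid of `Function.End ℕ+` (functions under
composition) consisting of strictly increasing functions `σ : ℕ+ → ℕ+` such that
`σ n = n + ℓ` for some `ℓ` and all sufficiently large `n`. -/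
def IncMonoid : Submonoid (Function.End ℕ+) where
  carrier := {f | StrictMono f ∧ ∃ (l : ℕ) (N : ℕ+), ∀ n : ℕ+, N ≤ n → ((f n : ℕ) = (n : ℕ) + l)}
  one_mem' := ⟨fun _ _ h => h, 0, 1, fun n _ => by show ((n : ℕ+) : ℕ) = (n : ℕ) + 0; omega⟩
  mul_mem' := by
    rintro f g ⟨hf1, lf, Nf, hf2⟩ ⟨hg1, lg, Ng, hg2⟩
    refine ⟨hf1.comp hg1, lg + lf, max Nf Ng, fun n hn => ?_⟩
    have h1 : (g n : ℕ) = (n : ℕ) + lg := hg2 n (le_trans (le_max_right _ _) hn)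
    have h2 : Nf ≤ g n := by
      rw [← PNat.coe_le_coe, h1]
      have : (Nf : ℕ) ≤ (n : ℕ) := (PNat.coe_le_coe _ _).2 (le_trans (le_max_left _ _) hn)
      omega
    have h3 := hf2 (g n) h2
    show ((f (g n) : ℕ)) = (n : ℕ) + (lg + lf)
    omega

/-- The increasing monoid, as a type. -/
abbrev IncM : Type := IncMonoid

theorem IncM.strictMono (σ : IncM) : StrictMono σ.1 := σ.2.1

theorem IncM.le_apply (σ : IncM) (n : ℕ+) : n ≤ σ.1 n := by
  induction n using PNat.recOn with
  | one => exact (σ.1 1).one_le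
  | succ n ih =>
      have h2 : σ.1 n < σ.1 (n + 1) := σ.strictMono (by rw [← PNat.coe_lt_coe]; push_cast; omega)
      rw [← PNat.coe_le_coe] at *
      rw [← PNat.coe_lt_coe] at h2
      push_cast at *
      omega

/-- The underlying function of the generator `α_k`. -/
def alphaFun (k : ℕ+) : Function.End ℕ+ := fun n => if n < k then n else n + 1

theorem alphaFun_strictMono (k : ℕ+) : StrictMono (alphaFun k) := by
  intro a b hab
  unfold alphaFun
  split_ifs with h1 h2 <;>
    rw [← PNat.coe_lt_coe] at * <;> push_cast at * <;> omega

theorem alphaFun_mem (k : ℕ+) : alphaFun k ∈ IncMonoid := by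
  refine ⟨alphaFun_strictMono k, 1, k, fun n hn => ?_⟩
  unfold alphaFun
  rw [if_neg (not_lt.2 hn)]
  push_cast
  ring

/-- The generator `α_k` of the increasing monoid (`k ≥ 1`). -/
def alpha (k : ℕ+) : IncM := ⟨alphaFun k, alphaFun_mem k⟩

/-- The submonoid `I_{≥ n}` of `I` generated by the `α_i` with `i ≥ n`. -/
def Iges (n : ℕ+) : Submonoid IncM := Submonoid.closure (alpha '' Set.Ici n)

/-- The submonoid `I_{> n}` of `I` generated by the `α_i` with `i > n`. -/
def Igt (n : ℕ) : Submonoid IncM := Submonoid.closure {s | ∃ i : ℕ+, n < (i : ℕ) ∧ s = alpha i}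

/-- The monoid algebra `k[I]` of the increasing monoid. -/
abbrev IncAlg (k : Type*) [Field k] : Type _ := MonoidAlgebra k IncM

/-- The image of `σ ∈ I` in the monoid algebra `k[I]`. -/
abbrev ofInc (k : Type*) [Field k] (σ : IncM) : IncAlg k := MonoidAlgebra.of k IncM σ

/-- A `k[I]`-module is smooth if every vector is fixed by some `I_{>n}`. -/
def IsSmoothMod (k : Type*) [Field k] (M : Type*) [AddCommMonoid M]
    [Module (IncAlg k) M] : Prop :=
  ∀ x : M, ∃ n : ℕ, ∀ σ ∈ Igt n, ofInc k σ • x = x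

/-! ### The principal modules `A^r` -/

/-- Index set for the basis of the principal module `A^r`:
strictly increasing `r`-tuples of positive integers. -/
def Idx (r : ℕ) : Type := {v : Fin r → ℕ+ // StrictMono v}

/-- The action of `σ ∈ I` on the index set of `A^r`. -/
def idxAct {r : ℕ} (σ : IncM) (t : Idx r) : Idx r :=
  ⟨σ.1 ∘ t.1, (IncM.strictMono σ).comp t.2⟩

/-- The representation of the increasing monoid on the principal module `A^r`. -/
def prinRep (k : Type*) [Field k] (r : ℕ) : Representation k IncM (Idx r →₀ k) where
  toFun σ := Finsupp.lmapDomain k k (idxAct σ)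
  map_one' := LinearMap.ext fun v => by
    have h : (idxAct (1 : IncM) : Idx r → Idx r) = id := funext fun t => rfl
    simp [Finsupp.lmapDomain_apply, h, Finsupp.mapDomain_id]
  map_mul' := fun σ τ => LinearMap.ext fun v => by
    have h : (idxAct (σ * τ) : Idx r → Idx r) = (idxAct σ) ∘ (idxAct τ) :=
      funext fun t => rfl
    show Finsupp.lmapDomain k k (idxAct (σ * τ)) v =
      Finsupp.lmapDomain k k (idxAct σ) (Finsupp.lmapDomain k k (idxAct τ) v)
    simp [Finsupp.lmapDomain_apply, h, Finsupp.mapDomain_comp]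

/-- The principal module `A^r`, as a module over the monoid algebra `k[I]`. -/
abbrev PrinMod (k : Type*) [Field k] (r : ℕ) : Type _ := (prinRep k r).asModule

/-- The basis vector `e_t` of the principal module `A^r`. -/
def ePrin (k : Type*) [Field k] {r : ℕ} (t : Idx r) : PrinMod k r :=
  (prinRep k r).asModuleEquiv.symm (Finsupp.single t 1)

/-- The tuple `(1, 2, …, r)` indexing the canonical generator `e_{1,…,r}` of `A^r`. -/
def iotaIdx (r : ℕ) : Idx r :=
  ⟨fun i => ⟨(i : ℕ) + 1, Nat.succ_pos _⟩, fun a b h => by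
    show (a : ℕ) + 1 < (b : ℕ) + 1; exact Nat.succ_lt_succ h⟩

/-! ### The simple modules `B^n` -/

/-- `σ ∈ I` fixes the natural number `n`, with the convention `σ 0 = 0`. -/
def fixesNat (σ : IncM) (n : ℕ) : Prop := ∀ h : 0 < n, σ.1 ⟨n, h⟩ = ⟨n, h⟩

theorem fixesNat_mul (σ τ : IncM) (n : ℕ) :
    fixesNat (σ * τ) n ↔ fixesNat σ n ∧ fixesNat τ n := by
  rcases Nat.eq_zero_or_pos n with h0 | h0
  · subst h0
    constructor
    · exact fun _ => ⟨fun h => absurd h (lt_irrefl 0), fun h => absurd h (lt_irrefl 0)⟩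
    · exact fun _ h => absurd h (lt_irrefl 0)
  · set p : ℕ+ := ⟨n, h0⟩
    have happ : ∀ h : 0 < n, (σ * τ).1 ⟨n, h⟩ = σ.1 (τ.1 ⟨n, h⟩) := fun _ => rfl
    constructor
    · intro h
      have hfix : σ.1 (τ.1 p) = p := h h0
      have h1 : p ≤ τ.1 p := τ.le_apply p
      have h2 : τ.1 p ≤ σ.1 (τ.1 p) := σ.le_apply _
      have hτp : τ.1 p = p := le_antisymm (h2.trans_eq hfix) h1
      have hσp : σ.1 p = p := by rw [hτp] at hfix; exact hfix
      exact ⟨fun _ => hσp, fun _ => hτp⟩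
    · rintro ⟨hσ, hτ⟩ h
      rw [happ h]
      have := hτ h0
      rw [this, hσ h0]

/-- The representation of the increasing monoid on the simple module `B^n`:
`σ` acts by the identity if `σ(n) = n` (with `σ(0) = 0`) and by `0` otherwise. -/
def bRep (k : Type*) [Field k] (n : ℕ) : Representation k IncM k where
  toFun σ := if fixesNat σ n then 1 else 0
  map_one' := by
    try dsimp only
    rw [if_pos]
    intro h
    rfl
  map_mul' := fun σ τ => by
    try dsimp only
    by_cases hσ : fixesNat σ n
    · by_cases hτ : fixesNat τ n
      · rw [if_pos ((fixesNat_mul σ τ n).2 ⟨hσ, hτ⟩), if_pos hσ, if_pos hτ, one_mul]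
      · rw [if_neg (fun h => hτ ((fixesNat_mul σ τ n).1 h).2), if_pos hσ, if_neg hτ, one_mul]
    · by_cases hτ : fixesNat τ n
      · rw [if_neg (fun h => hσ ((fixesNat_mul σ τ n).1 h).1), if_neg hσ, if_pos hτ, mul_one]
      · rw [if_neg (fun h => hσ ((fixesNat_mul σ τ n).1 h).1), if_neg hσ, if_neg hτ, mul_zero]

/-- The simple module `B^n`, as a module over the monoid algebra `k[I]`. -/
abbrev BMod (k : Type*) [Field k] (n : ℕ) : Type _ := (bRep k n).asModule

/-!
`A^r` is the permutation module of the `I`-set of increasing `r`-tuples, and this set is the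
orbit of `(1, …, r)`: any tuple `t` is the image of `(1, …, r)` under the element of `I` that
follows `t` on `{1, …, r}` and is a translation beyond. Hence a `k[I]`-linear map out of `A^r` is
determined by the image `x` of `e_{1,…,r}`, and such a map exists as soon as `σ • x = τ • x`
whenever `σ` and `τ` agree on `{1, …, r}`. For such `σ, τ`, both eventually translations, suitable
powers of `α_{r+1}` (which fixes `{1, …, r}` and shifts the rest) give
`σ α_{r+1}^{m₁} = τ α_{r+1}^{m₂}`, so the condition holds when `α_{r+1}` fixes `x`.
-/

namespace Representation

variable {k G X M : Type*} [CommSemiring k] [Monoid G] [MulAction G X]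
  [AddCommMonoid M] [Module (MonoidAlgebra k G) M] {ρ : Representation k G (X →₀ k)}

theorem asModuleEquiv_symm_single_smul (hρ : ∀ g, ρ g = Finsupp.lmapDomain k k (g • ·))
    (g : G) (x : X) (c : k) :
    ρ.asModuleEquiv.symm (Finsupp.single (g • x) c) =
      MonoidAlgebra.single g c • ρ.asModuleEquiv.symm (Finsupp.single x 1) := by
  apply ρ.asModuleEquiv.injective
  rw [LinearEquiv.apply_symm_apply, asModuleEquiv_map_smul, LinearEquiv.apply_symm_apply,
    asAlgebraHom_single, LinearMap.smul_apply, hρ, Finsupp.lmapDomain_apply,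
    Finsupp.mapDomain_single, Finsupp.smul_single_one]

theorem single_smul_eq_of_smul_eq {x₀ : X} {m : M}
    (hm : ∀ g h : G, g • x₀ = h • x₀ → MonoidAlgebra.of k G g • m = MonoidAlgebra.of k G h • m)
    {g h : G} (hgh : g • x₀ = h • x₀) (c : k) :
    (MonoidAlgebra.single g c : MonoidAlgebra k G) • m = MonoidAlgebra.single h c • m := by
  have hsingle (g : G) : (MonoidAlgebra.single g c : MonoidAlgebra k G) =
      MonoidAlgebra.single 1 c * MonoidAlgebra.of k G g := by
    rw [MonoidAlgebra.of_apply, MonoidAlgebra.single_mul_single, one_mul, mul_one]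
  rw [hsingle g, hsingle h, mul_smul, mul_smul, hm g h hgh]

theorem asModule_linearMap_ext (hρ : ∀ g, ρ g = Finsupp.lmapDomain k k (g • ·))
    {x₀ : X} (hx₀ : ∀ x, ∃ g : G, g • x₀ = x) {f f' : ρ.asModule →ₗ[MonoidAlgebra k G] M}
    (h : f (ρ.asModuleEquiv.symm (Finsupp.single x₀ 1)) =
      f' (ρ.asModuleEquiv.symm (Finsupp.single x₀ 1))) : f = f' := by
  have hcomp : f.toAddMonoidHom.comp ρ.asModuleEquiv.symm.toAddMonoidHom =
      f'.toAddMonoidHom.comp ρ.asModuleEquiv.symm.toAddMonoidHom :=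
    Finsupp.addHom_ext fun x c => by
      obtain ⟨g, rfl⟩ := hx₀ x
      change f (ρ.asModuleEquiv.symm _) = f' (ρ.asModuleEquiv.symm _)
      rw [asModuleEquiv_symm_single_smul hρ, map_smul, map_smul, h]
  ext v
  simpa using DFunLike.congr_fun hcomp (ρ.asModuleEquiv v)

theorem exists_asModule_linearMap_apply_eq (hρ : ∀ g, ρ g = Finsupp.lmapDomain k k (g • ·))
    {x₀ : X} (hx₀ : ∀ x, ∃ g : G, g • x₀ = x) (m : M)
    (hm : ∀ g h : G, g • x₀ = h • x₀ → MonoidAlgebra.of k G g • m = MonoidAlgebra.of k G h • m) :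
    ∃ f : ρ.asModule →ₗ[MonoidAlgebra k G] M,
      f (ρ.asModuleEquiv.symm (Finsupp.single x₀ 1)) = m := by
  choose s hs using hx₀
  let F₀ : (X →₀ k) →+ M := Finsupp.liftAddHom fun x =>
    (LinearMap.toSpanSingleton (MonoidAlgebra k G) M m).toAddMonoidHom.comp
      (MonoidAlgebra.singleAddHom (s x))
  have hF₀ (x : X) (c : k) : F₀ (Finsupp.single x c) = MonoidAlgebra.single (s x) c • m :=
    Finsupp.liftAddHom_apply_single _ x c
  have hF₀_smul (a : MonoidAlgebra k G) (v : X →₀ k) : F₀ (ρ.asAlgebraHom a v) = a • F₀ v := by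
    induction a using MonoidAlgebra.induction_linear with
    | zero => rw [map_zero, LinearMap.zero_apply, map_zero, zero_smul]
    | add a b ha hb => rw [map_add, LinearMap.add_apply, map_add, ha, hb, add_smul]
    | single g b =>
      induction v using Finsupp.induction_linear with
      | zero => rw [map_zero, map_zero, smul_zero]
      | add v w hv hw => rw [map_add, map_add, hv, hw, map_add, smul_add]
      | single x c =>
        rw [asAlgebraHom_single, LinearMap.smul_apply, hρ, Finsupp.lmapDomain_apply,
          Finsupp.mapDomain_single, Finsupp.smul_single, smul_eq_mul, hF₀, hF₀, ← mul_smul,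
          MonoidAlgebra.single_mul_single]
        exact single_smul_eq_of_smul_eq hm (by rw [hs, mul_smul, hs]) _
  refine ⟨{ toFun v := F₀ (ρ.asModuleEquiv v)
            map_add' v w := by rw [map_add, map_add]
            map_smul' a v := by rw [asModuleEquiv_map_smul, hF₀_smul, RingHom.id_apply] }, ?_⟩
  change F₀ (ρ.asModuleEquiv (ρ.asModuleEquiv.symm _)) = m
  rw [LinearEquiv.apply_symm_apply, hF₀,
    single_smul_eq_of_smul_eq hm ((hs x₀).trans (one_smul G x₀).symm) (1 : k),
    ← MonoidAlgebra.one_def, one_smul]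

theorem existsUnique_asModule_linearMap_apply_eq
    (hρ : ∀ g, ρ g = Finsupp.lmapDomain k k (g • ·)) {x₀ : X} (hx₀ : ∀ x, ∃ g : G, g • x₀ = x)
    (m : M)
    (hm : ∀ g h : G, g • x₀ = h • x₀ → MonoidAlgebra.of k G g • m = MonoidAlgebra.of k G h • m) :
    ∃! f : ρ.asModule →ₗ[MonoidAlgebra k G] M,
      f (ρ.asModuleEquiv.symm (Finsupp.single x₀ 1)) = m :=
  let ⟨f, hf⟩ := exists_asModule_linearMap_apply_eq hρ hx₀ m hm
  ⟨f, hf, fun _ hf' => asModule_linearMap_ext hρ hx₀ (hf'.trans hf.symm)⟩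

end Representation

instance (r : ℕ) : MulAction IncM (Idx r) where
  smul := idxAct
  one_smul _ := rfl
  mul_smul _ _ _ := rfl

theorem coe_alpha_pow_apply (a n : ℕ+) (m : ℕ) :
    (((alpha a ^ m).1 n : ℕ+) : ℕ) = if n < a then (n : ℕ) else n + m := by
  induction m generalizing n with
  | zero => split_ifs <;> rfl
  | succ m ih =>
    change (((alpha a ^ m).1 ((alpha a).1 n) : ℕ+) : ℕ) = _
    by_cases hn : n < a
    · rw [show (alpha a).1 n = n from if_pos hn, ih, if_pos hn, if_pos hn]
    · rw [show (alpha a).1 n = n + 1 from if_neg hn, ih, if_neg hn, if_neg, PNat.add_coe,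
        PNat.one_coe, add_assoc, add_comm 1]
      rw [← PNat.coe_lt_coe] at hn ⊢
      push_cast
      omega

theorem IncM.exists_mul_alpha_pow_eq {σ τ : IncM} {a : ℕ+} (h : ∀ n < a, σ.1 n = τ.1 n) :
    ∃ m₁ m₂ : ℕ, σ * alpha a ^ m₁ = τ * alpha a ^ m₂ := by
  obtain ⟨l₁, N₁, hσ⟩ := σ.2.2
  obtain ⟨l₂, N₂, hτ⟩ := τ.2.2
  refine ⟨N₁ + N₂ + l₂, N₁ + N₂ + l₁, Subtype.ext (funext fun n => ?_)⟩
  change σ.1 ((alpha a ^ _).1 n) = τ.1 ((alpha a ^ _).1 n)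
  by_cases hn : n < a
  · have hfix (m : ℕ) : (alpha a ^ m).1 n = n := PNat.coe_injective (by
      rw [coe_alpha_pow_apply, if_pos hn])
    rw [hfix, hfix, h n hn]
  · have hshift (m : ℕ) : (((alpha a ^ m).1 n : ℕ+) : ℕ) = n + m := by
      rw [coe_alpha_pow_apply, if_neg hn]
    apply PNat.coe_injective
    rw [hσ _ (by rw [← PNat.coe_le_coe, hshift]; omega),
      hτ _ (by rw [← PNat.coe_le_coe, hshift]; omega), hshift, hshift]
    omega

theorem ofInc_smul_eq_of_eqOn {k : Type*} [Field k] {M : Type*} [AddCommMonoid M]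
    [Module (IncAlg k) M] {x : M} {a : ℕ+} (hx : ofInc k (alpha a) • x = x) {σ τ : IncM}
    (h : ∀ n < a, σ.1 n = τ.1 n) : ofInc k σ • x = ofInc k τ • x := by
  simp only [ofInc] at hx ⊢
  have hpow (m : ℕ) : MonoidAlgebra.of k IncM (alpha a ^ m) • x = x := by
    induction m with
    | zero => rw [pow_zero, map_one, one_smul]
    | succ m ih => rw [pow_succ, map_mul, mul_smul, hx, ih]
  obtain ⟨m₁, m₂, he⟩ := IncM.exists_mul_alpha_pow_eq h
  calc MonoidAlgebra.of k IncM σ • x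
      = MonoidAlgebra.of k IncM (σ * alpha a ^ m₁) • x := by rw [map_mul, mul_smul, hpow]
    _ = MonoidAlgebra.of k IncM (τ * alpha a ^ m₂) • x := by rw [he]
    _ = MonoidAlgebra.of k IncM τ • x := by rw [map_mul, mul_smul, hpow]

theorem alpha_succPNat_mem_Igt (r : ℕ) : alpha r.succPNat ∈ Igt r :=
  Submonoid.subset_closure ⟨r.succPNat, r.lt_succ_self, rfl⟩

namespace Idx

variable {r : ℕ}

theorem apply_eq_of_smul_iotaIdx_eq {σ τ : IncM} (h : σ • iotaIdx r = τ • iotaIdx r) :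
    ∀ n < r.succPNat, σ.1 n = τ.1 n := by
  intro n hn
  rw [← PNat.coe_lt_coe, Nat.succPNat_coe] at hn
  have := n.pos
  have hι : (iotaIdx r).1 ⟨n - 1, by omega⟩ = n := PNat.coe_injective (by
    change (n : ℕ) - 1 + 1 = n
    omega)
  have hcongr : σ.1 ((iotaIdx r).1 ⟨n - 1, by omega⟩) = τ.1 ((iotaIdx r).1 ⟨n - 1, by omega⟩) :=
    congrFun (congrArg Subtype.val h) _
  rwa [hι] at hcongr

/-- The shift `∑ tᵢ` exceeds every `tᵢ`, which keeps the extension increasing past `r`. -/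
def extend (t : Idx r) (n : ℕ+) : ℕ+ :=
  if h : (n : ℕ) ≤ r then t.1 ⟨n - 1, by have := n.pos; omega⟩
  else ⟨n + ∑ i, (t.1 i : ℕ), by positivity⟩

theorem extend_of_le (t : Idx r) {n : ℕ+} (hn : (n : ℕ) ≤ r) :
    t.extend n = t.1 ⟨n - 1, by have := n.pos; omega⟩ :=
  dif_pos hn

theorem coe_extend_of_lt (t : Idx r) {n : ℕ+} (hn : r < n) :
    (t.extend n : ℕ) = n + ∑ i, (t.1 i : ℕ) :=
  congrArg Subtype.val (dif_neg (not_le.2 hn))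

theorem extend_strictMono (t : Idx r) : StrictMono t.extend := by
  intro p q hpq
  rw [← PNat.coe_lt_coe] at hpq ⊢
  have hle (i : Fin r) : (t.1 i : ℕ) ≤ ∑ j, (t.1 j : ℕ) :=
    Finset.single_le_sum (f := fun j => (t.1 j : ℕ)) (fun _ _ => Nat.zero_le _)
      (Finset.mem_univ i)
  have := p.pos
  by_cases hq : (q : ℕ) ≤ r
  · rw [extend_of_le t (hpq.le.trans hq), extend_of_le t hq, PNat.coe_lt_coe]
    exact t.2 (Fin.mk_lt_mk.2 (by omega))
  · rw [coe_extend_of_lt t (not_le.1 hq)]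
    by_cases hp : (p : ℕ) ≤ r
    · rw [extend_of_le t hp]
      have := hle ⟨p - 1, by omega⟩
      omega
    · rw [coe_extend_of_lt t (not_le.1 hp)]
      omega

def toIncM (t : Idx r) : IncM :=
  ⟨t.extend, t.extend_strictMono, ∑ i, (t.1 i : ℕ), r.succPNat, fun _ hn =>
    t.coe_extend_of_lt (Nat.lt_of_succ_le ((PNat.coe_le_coe _ _).2 hn))⟩

theorem toIncM_smul_iotaIdx (t : Idx r) : t.toIncM • iotaIdx r = t :=
  Subtype.ext (funext fun i => dif_pos (Nat.succ_le_of_lt i.2))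

end Idx

/-- Universal property of the principal module `A^r`: for any
`k[I]`-module `M` and any `x ∈ M` fixed by `I_{>r}`, there is a unique `k[I]`-linear
map `f : A^r → M` with `f(e_{1,…,r}) = x`. -/
theorem principal_module_universal_property (k : Type*) [Field k] (r : ℕ)
    (M : Type*) [AddCommGroup M] [Module (IncAlg k) M] (x : M)
    (hx : ∀ σ ∈ Igt r, ofInc k σ • x = x) :
    ∃! f : PrinMod k r →ₗ[IncAlg k] M, f (ePrin k (iotaIdx r)) = x :=
  Representation.existsUnique_asModule_linearMap_apply_eq (ρ := prinRep k r) (fun _ => rfl)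
    (fun t => ⟨t.toIncM, t.toIncM_smul_iotaIdx⟩) x fun _ _ h =>
      ofInc_smul_eq_of_eqOn (hx _ (alpha_succPNat_mem_Igt r)) (Idx.apply_eq_of_smul_iotaIdx_eq h)

end
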